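/- Let Ω ⊂ ℝ^d be open, bounded, convex with Lipschitz boundary, and f, g ∈ L^∞(Ω) probability densities with inf_Ω f > 0 and g vanishing near ∂Ω. Then there is C > 0 such that (1/C)·dist(x,∂Ω) ≤ σ(x) ≤ C·dist(x,∂Ω) for all x ∈ Ω, where σ is the interpolation density. -/

import Mathlib

/-!
Write `σ x = ∫₀¹ ρₜ x dt`, where `ρₜ = interpolantDensity volume Ω f g d · t` is the density of
`(1 - t) X + t Y` for independent `X ∼ f`, `Y ∼ g`. Bounding `f` by `Cf` and using `∫ g = 1`, or
`g` by `Cg` and using `∫ f = 1` after the change of variables `z = (x - t y) / (1 - t)`, gives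
`ρₜ ≤ max Cf Cg * 2 ^ d`.

Upper bound: if `x = (1 - t) z + t y` with `z, y ∈ Ω`, convexity gives
`dist(x, ∂Ω) ≥ t * dist(y, ∂Ω)`, which exceeds `t * δ₀` on the support of `g`; hence `ρₜ x = 0` as
soon as `t > dist(x, ∂Ω) / δ₀`.

Lower bound: if `t * diam Ω < (1 - t) * dist(x, ∂Ω)`, then every `(x - t y) / (1 - t)` with `y ∈ Ω`
lies in the ball of radius `dist(x, ∂Ω)` around `x`, which is contained in `Ω`, where `f ≥ ε`; so
`ρₜ x ≥ ε` for `t` in an interval of length `dist(x, ∂Ω) / (dist(x, ∂Ω) + diam Ω)`.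
-/

open MeasureTheory Set Metric Module

section Metric

variable {X : Type*} [PseudoMetricSpace X] {Ω : Set X} {x : X}

lemma le_infDist_frontier_of_ball_subset {R : ℝ} (ho : IsOpen Ω) (hF : (frontier Ω).Nonempty)
    (h : ball x R ⊆ Ω) : R ≤ infDist x (frontier Ω) :=
  (le_infDist hF).2 fun _ hw =>
    not_lt.1 fun hxw => (ho.frontier_eq ▸ hw).2 (h (mem_ball'.2 hxw))

lemma infDist_frontier_le_diam (hb : Bornology.IsBounded Ω) (hF : (frontier Ω).Nonempty)
    (hx : x ∈ Ω) : infDist x (frontier Ω) ≤ diam Ω := by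
  obtain ⟨w, hw⟩ := hF
  calc infDist x (frontier Ω) ≤ dist x w := infDist_le_dist_of_mem hw
    _ ≤ diam (closure Ω) := dist_le_diam_of_mem hb.closure (subset_closure hx)
        (frontier_subset_closure hw)
    _ = diam Ω := diam_closure Ω

end Metric

section Normed

variable {E : Type*} [NormedAddCommGroup E] [NormedSpace ℝ E] [FiniteDimensional ℝ E]
  {Ω : Set E} {x y z : E}

lemma ball_infDist_frontier_subset (hx : x ∈ Ω) : ball x (infDist x (frontier Ω)) ⊆ Ω := by
  rcases eq_or_ne Ω univ with rfl | hΩ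
  · exact subset_univ _
  obtain ⟨w, hw, hxw⟩ := exists_mem_frontier_infDist_compl_eq_dist hx hΩ
  exact (ball_subset_ball ((infDist_le_dist_of_mem hw).trans_eq hxw.symm)).trans
    ball_infDist_compl_subset

/-- The ball of radius `t * dist(y, ∂Ω)` around `(1 - t) z + t y` is the image of the ball of
radius `dist(y, ∂Ω)` around `y` under `u ↦ (1 - t) z + t u`. -/
lemma Convex.mul_infDist_frontier_le (hc : Convex ℝ Ω) (ho : IsOpen Ω) (hz : z ∈ Ω)
    (hy : y ∈ Ω) {t : ℝ} (ht0 : 0 < t) (ht1 : t ≤ 1) :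
    t * infDist y (frontier Ω) ≤ infDist ((1 - t) • z + t • y) (frontier Ω) := by
  rcases (frontier Ω).eq_empty_or_nonempty with hF | hF
  · simp [hF]
  refine le_infDist_frontier_of_ball_subset ho hF fun w hw => ?_
  set u := y + t⁻¹ • (w - ((1 - t) • z + t • y))
  have hu : u ∈ Ω := by
    refine ball_infDist_frontier_subset hy ?_
    rw [mem_ball, dist_eq_norm, add_sub_cancel_left, norm_smul, norm_inv,
      Real.norm_of_nonneg ht0.le, ← dist_eq_norm, inv_mul_lt_iff₀ ht0]
    exact mem_ball.1 hw
  convert hc hz hu (sub_nonneg.2 ht1) ht0.le (sub_add_cancel 1 t) using 1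
  rw [smul_add, smul_inv_smul₀ ht0.ne']
  abel

end Normed

lemma inv_pow_le_two_pow {s : ℝ} (hs : 1 / 2 ≤ s) (n : ℕ) : (s ^ n)⁻¹ ≤ 2 ^ n := by
  rw [← inv_pow]
  exact pow_le_pow_left₀ (by positivity) (inv_le_of_inv_le₀ (by norm_num) (by linarith)) n

lemma setIntegral_Ioo_zero_one_le_mul {φ : ℝ → ℝ} {M s : ℝ} (hs : 0 ≤ s)
    (hφ0 : ∀ t ∈ Ioo 0 1, 0 ≤ φ t) (hφM : ∀ t ∈ Ioo 0 1, φ t ≤ M)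
    (hφs : ∀ t ∈ Ioo 0 1, s < t → φ t = 0) :
    ∫ t in Ioo 0 1, φ t ≤ M * s := by
  have hhalf : (1 / 2 : ℝ) ∈ Ioo 0 1 := by norm_num
  have hM : 0 ≤ M := (hφ0 _ hhalf).trans (hφM _ hhalf)
  rw [setIntegral_eq_of_subset_of_forall_sdiff_eq_zero measurableSet_Ioo inter_subset_left
    fun t ht => hφs t ht.1 (not_le.1 fun h => ht.2 ⟨ht.1, h⟩)]
  calc ∫ t in Ioo 0 1 ∩ Iic s, φ t ≤ ‖∫ t in Ioo 0 1 ∩ Iic s, φ t‖ := Real.le_norm_self _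
    _ ≤ M * volume.real (Ioo 0 1 ∩ Iic s) :=
        norm_setIntegral_le_of_norm_le_const (measure_inter_lt_top_of_left_ne_top (by simp))
          fun t ht => (Real.norm_of_nonneg (hφ0 t ht.1)).trans_le (hφM t ht.1)
    _ ≤ M * volume.real (Ioc 0 s) := by
        gcongr
        · simp
        · exact fun t ht => ⟨ht.1.1, ht.2⟩
    _ = M * s := by simp [hs]

lemma mul_le_setIntegral_Ioo_zero_one {φ : ℝ → ℝ} {c s : ℝ} (hφi : IntegrableOn φ (Ioo 0 1))
    (hφ0 : ∀ t ∈ Ioo 0 1, 0 ≤ φ t) (hs0 : 0 ≤ s) (hs1 : s ≤ 1)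
    (hφc : ∀ t ∈ Ioo 0 s, c ≤ φ t) :
    c * s ≤ ∫ t in Ioo 0 1, φ t :=
  calc c * s = c * volume.real (Ioo 0 s) := by simp [hs0]
    _ ≤ ∫ t in Ioo 0 s, φ t := setIntegral_ge_of_const_le_real measurableSet_Ioo (by simp) hφc
        (hφi.mono_set (Ioo_subset_Ioo_right hs1))
    _ ≤ ∫ t in Ioo 0 1, φ t := setIntegral_mono_set hφi
        ((ae_restrict_iff' measurableSet_Ioo).2 (ae_of_all _ hφ0))
        (Ioo_subset_Ioo_right hs1).eventuallyLE

section Interpolation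

variable {E : Type*} [NormedAddCommGroup E] [NormedSpace ℝ E] [MeasurableSpace E]

noncomputable def interpolantDensity (μ : Measure E) (Ω : Set E) (f g : E → ℝ) (n : ℕ) (x : E)
    (t : ℝ) : ℝ :=
  ∫ y in Ω, f ((1 - t)⁻¹ • (x - t • y)) * g y * ((1 - t) ^ n)⁻¹ ∂μ

variable {μ : Measure E} {Ω : Set E} {f g : E → ℝ} {n : ℕ} {x : E} {t Cf Cg : ℝ}

lemma interpolantDensity_nonneg (hf : 0 ≤ f) (hg : 0 ≤ g) (ht : t ≤ 1) :
    0 ≤ interpolantDensity μ Ω f g n x t :=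
  integral_nonneg fun y =>
    mul_nonneg (mul_nonneg (hf _) (hg y)) (by have := sub_nonneg.2 ht; positivity)

lemma interpolantDensity_le_mul_setIntegral (hf : 0 ≤ f) (hg : 0 ≤ g)
    (hfC : ∀ z, f z ≤ Cf) (hgi : IntegrableOn g Ω μ) (ht : t ≤ 1) :
    interpolantDensity μ Ω f g n x t ≤ Cf * ((1 - t) ^ n)⁻¹ * ∫ y in Ω, g y ∂μ := by
  have hc : 0 ≤ ((1 - t) ^ n)⁻¹ := by have := sub_nonneg.2 ht; positivity
  rw [← integral_const_mul]
  refine integral_mono_of_nonneg (ae_of_all _ fun y => ?_) (hgi.const_mul _)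
    (ae_of_all _ fun y => ?_)
  · exact mul_nonneg (mul_nonneg (hf _) (hg y)) hc
  · calc f ((1 - t)⁻¹ • (x - t • y)) * g y * ((1 - t) ^ n)⁻¹
        ≤ Cf * g y * ((1 - t) ^ n)⁻¹ := by gcongr; exacts [hg y, hfC _]
      _ = Cf * ((1 - t) ^ n)⁻¹ * g y := by ring

variable [BorelSpace E] [FiniteDimensional ℝ E]

lemma stronglyMeasurable_interpolantDensity [SFinite μ] (hfm : Measurable f)
    (hgm : Measurable g) : StronglyMeasurable (interpolantDensity μ Ω f g n x) :=
  StronglyMeasurable.integral_prod_right' (ν := μ.restrict Ω)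
    (f := fun p : ℝ × E => f ((1 - p.1)⁻¹ • (x - p.1 • p.2)) * g p.2 * ((1 - p.1) ^ n)⁻¹)
    (by fun_prop : Measurable _).stronglyMeasurable

lemma interpolantDensity_eq_zero (hc : Convex ℝ Ω) (ho : IsOpen Ω) (hfΩ : ∀ z, z ∉ Ω → f z = 0)
    {δ : ℝ} (hgδ : ∀ y, infDist y (frontier Ω) ≤ δ → g y = 0) (ht0 : 0 < t) (ht1 : t < 1)
    (hxδ : infDist x (frontier Ω) < t * δ) :
    interpolantDensity μ Ω f g n x t = 0 := by
  refine (setIntegral_congr_fun ho.measurableSet fun y hy => ?_).trans (integral_zero _ _)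
  by_cases hz : (1 - t)⁻¹ • (x - t • y) ∈ Ω
  · have hxz : (1 - t) • ((1 - t)⁻¹ • (x - t • y)) + t • y = x := by
      rw [smul_inv_smul₀ (sub_pos.2 ht1).ne', sub_add_cancel]
    have hyδ : t * infDist y (frontier Ω) < t * δ :=
      (hxz ▸ hc.mul_infDist_frontier_le ho hz hy ht0 ht1.le).trans_lt hxδ
    simp [hgδ y (lt_of_mul_lt_mul_left hyδ ht0.le).le]
  · simp [hfΩ _ hz]

lemma le_interpolantDensity {ε : ℝ} (hΩm : MeasurableSet Ω) (hb : Bornology.IsBounded Ω)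
    (hfm : Measurable f) (hfε : ∀ z ∈ Ω, ε ≤ f z) (hf : 0 ≤ f)
    (hfC : ∀ z, f z ≤ Cf) (hg : 0 ≤ g) (hgi : IntegrableOn g Ω μ) (hx : x ∈ Ω) (ht0 : 0 ≤ t)
    (ht1 : t < 1) (htx : t * diam Ω < (1 - t) * infDist x (frontier Ω)) :
    ε * ∫ y in Ω, g y ∂μ ≤ interpolantDensity μ Ω f g n x t := by
  have h1t : 0 < 1 - t := sub_pos.2 ht1
  have hI : IntegrableOn (fun y => f ((1 - t)⁻¹ • (x - t • y)) * g y * ((1 - t) ^ n)⁻¹) Ω μ :=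
    (hgi.bdd_mul (c := Cf) (by fun_prop : Measurable _).aestronglyMeasurable
      (ae_of_all _ fun y => (Real.norm_of_nonneg (hf _)).trans_le (hfC _))).mul_const _
  rw [← integral_const_mul]
  refine setIntegral_mono_on (hgi.const_mul ε) hI hΩm fun y hy => ?_
  have hz : (1 - t)⁻¹ • (x - t • y) ∈ Ω := by
    refine ball_infDist_frontier_subset hx ?_
    have hzx : (1 - t)⁻¹ • (x - t • y) - x = (t / (1 - t)) • (x - y) := by
      match_scalars <;> field_simp
      ring
    rw [mem_ball, dist_eq_norm, hzx, norm_smul, Real.norm_of_nonneg (by positivity),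
      div_mul_eq_mul_div, div_lt_iff₀ h1t, mul_comm _ (1 - t), ← dist_eq_norm]
    exact (mul_le_mul_of_nonneg_left (dist_le_diam_of_mem hb hx hy) ht0).trans_lt htx
  have hc : 1 ≤ ((1 - t) ^ n)⁻¹ :=
    (one_le_inv₀ (by positivity)).2 (pow_le_one₀ h1t.le (by linarith))
  calc ε * g y ≤ f ((1 - t)⁻¹ • (x - t • y)) * g y :=
        mul_le_mul_of_nonneg_right (hfε _ hz) (hg y)
    _ ≤ f ((1 - t)⁻¹ • (x - t • y)) * g y * ((1 - t) ^ n)⁻¹ :=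
        le_mul_of_one_le_right (mul_nonneg (hf _) (hg y)) hc

variable [μ.IsAddHaarMeasure]

lemma integral_comp_inv_smul_sub_smul (f : E → ℝ) (x : E) (ht0 : 0 < t) (ht1 : t < 1) :
    ∫ y, f ((1 - t)⁻¹ • (x - t • y)) ∂μ = ((1 - t) / t) ^ finrank ℝ E * ∫ z, f z ∂μ := by
  have h1t : 0 < 1 - t := sub_pos.2 ht1
  rw [Measure.integral_comp_smul μ (fun u => f ((1 - t)⁻¹ • (x - u))),
    integral_sub_left_eq_self (fun u => f ((1 - t)⁻¹ • u)), Measure.integral_comp_smul,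
    smul_eq_mul, smul_eq_mul, ← mul_assoc, inv_pow, inv_inv, abs_of_pos (by positivity),
    abs_of_pos (by positivity), div_pow, div_eq_mul_inv, mul_comm ((1 - t) ^ _)]

lemma interpolantDensity_le_mul_integral (hf : 0 ≤ f) (hg : 0 ≤ g)
    (hgC : ∀ y, g y ≤ Cg) (hfi : Integrable f μ) (ht0 : 0 < t) (ht1 : t < 1) :
    interpolantDensity μ Ω f g (finrank ℝ E) x t ≤ Cg * (t ^ finrank ℝ E)⁻¹ * ∫ z, f z ∂μ := by
  have h1t : 0 < 1 - t := sub_pos.2 ht1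
  have hCg : 0 ≤ Cg := (hg 0).trans (hgC 0)
  set c := Cg * ((1 - t) ^ finrank ℝ E)⁻¹
  have hc : 0 ≤ c := by positivity
  have hfA : Integrable (fun y => c * f ((1 - t)⁻¹ • (x - t • y))) μ :=
    (((hfi.comp_smul (inv_ne_zero h1t.ne')).comp_sub_left x).comp_smul ht0.ne').const_mul _
  calc interpolantDensity μ Ω f g (finrank ℝ E) x t
      ≤ ∫ y in Ω, c * f ((1 - t)⁻¹ • (x - t • y)) ∂μ := by
        refine integral_mono_of_nonneg (ae_of_all _ fun y => ?_) hfA.integrableOn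
          (ae_of_all _ fun y => ?_)
        · exact mul_nonneg (mul_nonneg (hf _) (hg y)) (by positivity)
        · calc f ((1 - t)⁻¹ • (x - t • y)) * g y * ((1 - t) ^ finrank ℝ E)⁻¹
              ≤ f ((1 - t)⁻¹ • (x - t • y)) * Cg * ((1 - t) ^ finrank ℝ E)⁻¹ := by
                gcongr; exacts [hf _, hgC y]
            _ = c * f ((1 - t)⁻¹ • (x - t • y)) := by ring
    _ ≤ ∫ y, c * f ((1 - t)⁻¹ • (x - t • y)) ∂μ :=
        setIntegral_le_integral hfA (ae_of_all _ fun y => mul_nonneg hc (hf _))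
    _ = Cg * (t ^ finrank ℝ E)⁻¹ * ∫ z, f z ∂μ := by
        rw [integral_const_mul, integral_comp_inv_smul_sub_smul f x ht0 ht1, div_pow]
        simp only [c]
        field_simp

lemma interpolantDensity_le (hn : finrank ℝ E = n) (hf : 0 ≤ f) (hg : 0 ≤ g)
    (hfC : ∀ z, f z ≤ Cf) (hgC : ∀ y, g y ≤ Cg) (hfi : Integrable f μ) (hgi : IntegrableOn g Ω μ)
    (hf1 : ∫ z, f z ∂μ = 1) (hg1 : ∫ y in Ω, g y ∂μ = 1) (ht : t ∈ Ioo 0 1) :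
    interpolantDensity μ Ω f g n x t ≤ max Cf Cg * 2 ^ n := by
  subst hn
  have hCf : 0 ≤ Cf := (hf 0).trans (hfC 0)
  rcases le_total t (1 / 2) with h | h
  · calc _ ≤ Cf * ((1 - t) ^ finrank ℝ E)⁻¹ :=
          (interpolantDensity_le_mul_setIntegral hf hg hfC hgi ht.2.le).trans_eq
            (by rw [hg1, mul_one])
      _ ≤ max Cf Cg * 2 ^ finrank ℝ E :=
          mul_le_mul (le_max_left _ _) (inv_pow_le_two_pow (by linarith) _)
            (by have := sub_pos.2 ht.2; positivity) (hCf.trans (le_max_left _ _))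
  · calc _ ≤ Cg * (t ^ finrank ℝ E)⁻¹ :=
          (interpolantDensity_le_mul_integral hf hg hgC hfi ht.1 ht.2).trans_eq
            (by rw [hf1, mul_one])
      _ ≤ max Cf Cg * 2 ^ finrank ℝ E :=
          mul_le_mul (le_max_right _ _) (inv_pow_le_two_pow h _)
            (by have := ht.1; positivity) (hCf.trans (le_max_left _ _))

lemma integral_interpolantDensity_le (hn : finrank ℝ E = n) (hc : Convex ℝ Ω) (ho : IsOpen Ω)
    (hfΩ : ∀ z, z ∉ Ω → f z = 0) {δ : ℝ} (hδ : 0 < δ)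
    (hgδ : ∀ y, infDist y (frontier Ω) ≤ δ → g y = 0) (hf : 0 ≤ f) (hg : 0 ≤ g)
    (hfC : ∀ z, f z ≤ Cf) (hgC : ∀ y, g y ≤ Cg) (hfi : Integrable f μ) (hgi : IntegrableOn g Ω μ)
    (hf1 : ∫ z, f z ∂μ = 1) (hg1 : ∫ y in Ω, g y ∂μ = 1) :
    ∫ t in Ioo 0 1, interpolantDensity μ Ω f g n x t ≤
      max Cf Cg * 2 ^ n / δ * infDist x (frontier Ω) :=
  calc _ ≤ max Cf Cg * 2 ^ n * (infDist x (frontier Ω) / δ) :=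
        setIntegral_Ioo_zero_one_le_mul (div_nonneg infDist_nonneg hδ.le)
          (fun t ht => interpolantDensity_nonneg hf hg ht.2.le)
          (fun t ht => interpolantDensity_le hn hf hg hfC hgC hfi hgi hf1 hg1 ht)
          fun t ht hxt => interpolantDensity_eq_zero hc ho hfΩ hgδ ht.1 ht.2
            ((div_lt_iff₀ hδ).1 hxt)
    _ = _ := by ring

lemma mul_div_le_integral_interpolantDensity (hn : finrank ℝ E = n) (hΩm : MeasurableSet Ω)
    (hb : Bornology.IsBounded Ω) (hfm : Measurable f) (hgm : Measurable g) {ε : ℝ}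
    (hfε : ∀ z ∈ Ω, ε ≤ f z) (hf : 0 ≤ f) (hg : 0 ≤ g) (hfC : ∀ z, f z ≤ Cf)
    (hgC : ∀ y, g y ≤ Cg) (hfi : Integrable f μ) (hgi : IntegrableOn g Ω μ)
    (hf1 : ∫ z, f z ∂μ = 1) (hg1 : ∫ y in Ω, g y ∂μ = 1) (hx : x ∈ Ω) :
    ε * (infDist x (frontier Ω) / (infDist x (frontier Ω) + diam Ω)) ≤
      ∫ t in Ioo 0 1, interpolantDensity μ Ω f g n x t := by
  set r := infDist x (frontier Ω)
  have hr : 0 ≤ r := infDist_nonneg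
  have hrD : 0 ≤ r + diam Ω := add_nonneg hr diam_nonneg
  have hIi : IntegrableOn (interpolantDensity μ Ω f g n x) (Ioo 0 1) :=
    Measure.integrableOn_of_bounded (by simp)
      (stronglyMeasurable_interpolantDensity hfm hgm).aestronglyMeasurable
      ((ae_restrict_iff' measurableSet_Ioo).2 (ae_of_all _ fun t ht =>
        (Real.norm_of_nonneg (interpolantDensity_nonneg hf hg ht.2.le)).trans_le
          (interpolantDensity_le hn hf hg hfC hgC hfi hgi hf1 hg1 ht)))
  have hs1 : r / (r + diam Ω) ≤ 1 := div_le_one_of_le₀ (le_add_of_nonneg_right diam_nonneg) hrD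
  refine mul_le_setIntegral_Ioo_zero_one hIi
    (fun t ht => interpolantDensity_nonneg hf hg ht.2.le) (by positivity) hs1 fun t ht => ?_
  have htx : t * diam Ω < (1 - t) * r := by
    rcases hrD.eq_or_lt with h | h
    · simp [← h] at ht
    · linarith [(lt_div_iff₀ h).1 ht.2]
  simpa [hg1] using le_interpolantDensity hΩm hb hfm hfε hf hfC hg hgi hx ht.1.le
    (ht.2.trans_le hs1) htx

end Interpolation

/-- if `Ω ⊂ ℝ^d` is open, bounded and convex (hence with Lipschitz boundary),
`f, g` are bounded probability densities on `Ω` with `inf_Ω f > 0` and `g` vanishing near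
`∂Ω`, then the interpolation density `σ` is comparable to the distance to the boundary:
there is `C > 0` with `(1/C) dist(x,∂Ω) ≤ σ(x) ≤ C dist(x,∂Ω)` for all `x ∈ Ω`. -/
theorem stmt_6 (d : ℕ) (Ω : Set (EuclideanSpace ℝ (Fin d)))
    (hΩo : IsOpen Ω) (hΩb : Bornology.IsBounded Ω) (hΩc : Convex ℝ Ω)
    (f g : EuclideanSpace ℝ (Fin d) → ℝ) (Cf Cg : ℝ)
    (hfm : Measurable f) (hgm : Measurable g)
    (hf0 : ∀ x, 0 ≤ f x) (hg0 : ∀ x, 0 ≤ g x)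
    (hfb : ∀ x, f x ≤ Cf) (hgb : ∀ x, g x ≤ Cg)
    (hfΩ : ∀ x, x ∉ Ω → f x = 0) (hgΩ : ∀ x, x ∉ Ω → g x = 0)
    (hf1 : ∫ x, f x = 1) (hg1 : ∫ x, g x = 1)
    (hfinf : ∃ ε : ℝ, 0 < ε ∧ ∀ x ∈ Ω, ε ≤ f x)
    (hδ : ∃ δ₀ : ℝ, 0 < δ₀ ∧ ∀ z, infDist z (frontier Ω) ≤ δ₀ → g z = 0) :
    ∃ C : ℝ, 0 < C ∧
      ∀ x ∈ Ω,
        (1 / C) * infDist x (frontier Ω) ≤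
            (∫ t in Ioo (0:ℝ) 1, ∫ y in Ω,
              f ((1 - t)⁻¹ • (x - t • y)) * g y * ((1 - t) ^ d)⁻¹) ∧
          (∫ t in Ioo (0:ℝ) 1, ∫ y in Ω,
              f ((1 - t)⁻¹ • (x - t • y)) * g y * ((1 - t) ^ d)⁻¹)
            ≤ C * infDist x (frontier Ω) := by
  obtain ⟨ε, hε, hfε⟩ := hfinf
  obtain ⟨δ, hδ, hgδ⟩ := hδ
  have hfi : Integrable f := integrable_of_integral_eq_one hf1
  have hgi : Integrable g := integrable_of_integral_eq_one hg1
  have hgΩ1 : ∫ y in Ω, g y = 1 := by rwa [setIntegral_eq_integral_of_forall_compl_eq_zero hgΩ]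
  have hF : (frontier Ω).Nonempty := by
    by_contra hF
    have hg : g = 0 := funext fun z => hgδ z (by simp [not_nonempty_iff_eq_empty.1 hF, hδ.le])
    simp [hg] at hg1
  have hM : 0 ≤ max Cf Cg * 2 ^ d := by have := (hf0 0).trans (hfb 0); positivity
  refine ⟨max Cf Cg * 2 ^ d / δ + 2 * diam Ω / ε + 1, by positivity, fun x hx => ?_⟩
  have hr : 0 < infDist x (frontier Ω) :=
    (isClosed_frontier.notMem_iff_infDist_pos hF).1 fun h => (hΩo.frontier_eq ▸ h).2 hx
  have hrD := infDist_frontier_le_diam hΩb hF hx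
  have hupper := integral_interpolantDensity_le (x := x) finrank_euclideanSpace_fin hΩc hΩo hfΩ
    hδ hgδ hf0 hg0 hfb hgb hfi hgi.integrableOn hf1 hgΩ1
  have hlower := mul_div_le_integral_interpolantDensity finrank_euclideanSpace_fin
    hΩo.measurableSet hΩb hfm hgm hfε hf0 hg0 hfb hgb hfi hgi.integrableOn hf1 hgΩ1 hx
  set r := infDist x (frontier Ω)
  set D := diam Ω
  set C := max Cf Cg * 2 ^ d / δ + 2 * D / ε + 1
  have hC : (r + D) / ε ≤ C := by
    have : (r + D) / ε ≤ 2 * D / ε := by gcongr; linarith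
    have : 0 ≤ max Cf Cg * 2 ^ d / δ := by positivity
    linarith
  refine ⟨?_, hupper.trans (by gcongr; linarith [div_nonneg (by linarith : 0 ≤ 2 * D) hε.le])⟩
  calc 1 / C * r = r / C := by ring
    _ ≤ r / ((r + D) / ε) := div_le_div_of_nonneg_left hr.le (by positivity) hC
    _ = ε * (r / (r + D)) := by field_simp
    _ ≤ _ := hlower
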